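/- Let S = (s_1, …, s_n) with n ≥ 2 be a list over a type with decidable equality having exactly σ distinct elements, let occ(a, S) be the number of occurrences of a in S, let H = Σ_a (occ(a,S)/n)·log₂(n/occ(a,S)) (sum over the distinct elements a of S), and for 2 ≤ i ≤ n let c_i be the number of occurrences of s_i among s_1, …, s_{i−1}. Then Σ_{i=2}^n ( ⌈log₂((i−1)/max(c_i, 1))⌉ + 1 ) ≤ n·H + 2n + (σ + 1)·(log₂ n + 2). -/

import Mathlib

/-!
Bounding each ceiling by `log₂(i / max(c_i, 1)) + 1` turns the sum into
`log₂ (n-1)! - Σ_a log₂ (occ a - 1)! + 2n`, because the positions holding `a` have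
`c_i = 0, 1, …, occ a - 1`. Since `(k-1)! = k!/k`, this is `log₂` of the multinomial
coefficient `n! / ∏_a (occ a)!` plus `Σ_a log₂ occ a - log₂ n ≤ (σ - 1) log₂ n`. The multinomial
coefficient times `∏_a (occ a)^(occ a)` is one term of the multinomial expansion of
`n^n = (Σ_a occ a)^n`, so its `log₂` is at most `n log₂ n - Σ_a occ a · log₂ occ a = nH`.
-/

open Finset Real Nat

namespace Nat

variable {ι : Type*} (s : Finset ι) (f : ι → ℕ)

theorem multinomial_mul_prod_pow_self_le :
    multinomial s f * ∏ i ∈ s, f i ^ f i ≤ (∑ i ∈ s, f i) ^ ∑ i ∈ s, f i := by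
  classical
  let g : ι → ℕ := fun i => if i ∈ s then f i else 0
  have hg : ∀ i ∈ s, f i = g i := fun i hi => (if_pos hi).symm
  have hmem : g ∈ piAntidiag s (∑ i ∈ s, f i) := by
    rw [mem_piAntidiag, sum_congr rfl hg]
    exact ⟨rfl, fun i hi => by_contra fun his => hi (if_neg his)⟩
  rw [sum_pow_eq_sum_piAntidiag, multinomial_congr hg,
    prod_congr rfl fun i hi => congrArg (f i ^ ·) (hg i hi)]
  exact single_le_sum (f := fun k => multinomial s k * ∏ i ∈ s, f i ^ k i)
    (fun _ _ => Nat.zero_le _) hmem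

theorem factorial_sum_mul_prod_pow_self_le :
    (∑ i ∈ s, f i)! * ∏ i ∈ s, f i ^ f i ≤
      (∑ i ∈ s, f i) ^ (∑ i ∈ s, f i) * ∏ i ∈ s, (f i)! := by
  rw [← multinomial_spec, mul_assoc, mul_comm]
  exact Nat.mul_le_mul_right _ (multinomial_mul_prod_pow_self_le s f)

theorem factorial_eq_max_one_mul_factorial_sub_one (k : ℕ) : k ! = max k 1 * (k - 1)! := by
  rcases Nat.eq_zero_or_pos k with rfl | hk
  · rfl
  · rw [max_eq_left hk, Nat.mul_factorial_pred hk.ne']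

end Nat

namespace Real

variable (b : ℝ) {ι : Type*} (s : Finset ι) (f : ι → ℕ)

theorem logb_factorial_sub_one {k : ℕ} (hk : k ≠ 0) :
    logb b ((k - 1)! : ℝ) = logb b (k ! : ℝ) - logb b k := by
  rw [← Nat.mul_factorial_pred hk, Nat.cast_mul,
    logb_mul (by exact_mod_cast hk) (by positivity)]
  ring

theorem sum_range_logb_eq_logb_factorial (n : ℕ) :
    ∑ i ∈ range n, logb b (i : ℝ) = logb b ((n - 1)! : ℝ) := by
  induction n with
  | zero => simp
  | succ k ih =>
    rcases Nat.eq_zero_or_pos k with rfl | hk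
    · simp
    · rw [sum_range_succ, ih, logb_factorial_sub_one b hk.ne', Nat.add_sub_cancel]
      ring

theorem logb_factorial_sub_sum_logb_factorial_le {b : ℝ} (hb : 1 < b) {N : ℕ}
    (hN : ∑ i ∈ s, f i = N) :
    logb b (N ! : ℝ) - ∑ i ∈ s, logb b ((f i)! : ℝ) ≤
      N * logb b N - ∑ i ∈ s, f i * logb b (f i) := by
  subst hN
  have hpow : ∀ k : ℕ, (k : ℝ) ^ k ≠ 0 := fun k => by exact_mod_cast Nat.pow_self_pos.ne'
  have hlog := logb_le_logb_of_le hb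
    (by exact_mod_cast Nat.mul_pos (factorial_pos _) (prod_pos fun i _ => Nat.pow_self_pos))
    ((Nat.cast_le (α := ℝ)).mpr (factorial_sum_mul_prod_pow_self_le s f))
  simp only [Nat.cast_mul, Nat.cast_prod, Nat.cast_pow] at hlog
  rw [logb_mul (by positivity) (prod_ne_zero_iff.mpr fun i _ => hpow _),
    logb_mul (hpow _) (by positivity), logb_prod _ _ fun i _ => hpow _,
    logb_prod _ _ fun i _ => by positivity] at hlog
  simp only [logb_pow] at hlog
  linarith

theorem mul_sum_div_mul_logb_div_eq {N : ℕ} (hN : ∑ i ∈ s, f i = N) :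
    (N : ℝ) * ∑ i ∈ s, (f i : ℝ) / N * logb b (N / f i) =
      N * logb b N - ∑ i ∈ s, f i * logb b (f i) := by
  have hterm : ∀ i ∈ s, (N : ℝ) * ((f i : ℝ) / N * logb b (N / f i)) =
      f i * logb b N - f i * logb b (f i) := by
    intro i hi
    rcases Nat.eq_zero_or_pos (f i) with hfi | hfi
    · simp [hfi]
    have hN_pos : 0 < N := hN ▸ hfi.trans_le (single_le_sum (fun _ _ => Nat.zero_le _) hi)
    rw [logb_div (by positivity) (by positivity)]
    field_simp
  rw [mul_sum, sum_congr rfl hterm, sum_sub_distrib, ← sum_mul, ← Nat.cast_sum, hN]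

theorem ceil_logb_div_add_one_le {x y : ℝ} (hx : x ≠ 0) (hy : y ≠ 0) :
    ((⌈logb b (x / y)⌉ + 1 : ℤ) : ℝ) ≤ logb b x - logb b y + 2 := by
  have := Int.ceil_lt_add_one (logb b (x / y))
  push_cast
  rw [logb_div hx hy] at *
  linarith

end Real

namespace List

variable {α : Type*} [DecidableEq α]

-- Any `t ⊇ S` works because absent elements contribute `(0 - 1)! = 1`; fixing `t` keeps the
-- induction over `S` free of changing index sets.
theorem prod_range_max_count_take_one (S : List α) (d : α) {t : Finset α}
    (ht : ∀ a ∈ S, a ∈ t) :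
    ∏ i ∈ Finset.range S.length, max ((S.take i).count (S.getD i d)) 1 =
      ∏ a ∈ t, (S.count a - 1)! := by
  induction S using List.reverseRecOn with
  | nil => simp
  | append_singleton l x ih =>
    have hx : x ∈ t := ht x (by simp)
    have hcount : ∀ a, ((l ++ [x]).count a - 1)! =
        (l.count a - 1)! * if a = x then max (l.count x) 1 else 1 := by
      intro a
      by_cases hax : a = x
      · subst hax
        rw [count_append, count_singleton_self, Nat.add_sub_cancel, if_pos rfl, mul_comm,
          ← factorial_eq_max_one_mul_factorial_sub_one]
      · simp [count_append, hax, Ne.symm hax]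
    have hprefix : ∀ i ∈ Finset.range l.length,
        max (((l ++ [x]).take i).count ((l ++ [x]).getD i d)) 1 =
          max ((l.take i).count (l.getD i d)) 1 := by
      intro i hi
      rw [take_append_of_le_length (Finset.mem_range.mp hi).le,
        getD_append _ _ _ _ (Finset.mem_range.mp hi)]
    rw [length_append, length_singleton, Finset.prod_range_succ,
      Finset.prod_congr rfl hprefix, ih fun a ha => ht a (by simp [ha]),
      Finset.prod_congr rfl fun a _ => hcount a, Finset.prod_mul_distrib,
      Finset.prod_ite_eq' t x, if_pos hx, take_left, getD_eq_getElem _ _ (by simp)]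
    simp

theorem sum_logb_max_count_take_one (b : ℝ) (S : List α) :
    ∑ i : Fin S.length, logb b (max ((S.take i).count (S.get i)) 1 : ℕ) =
      ∑ a ∈ S.toFinset, logb b ((S.count a - 1)! : ℝ) := by
  cases S with
  | nil => simp
  | cons d l =>
    have hget : ∀ i : Fin (d :: l).length, (d :: l).get i = (d :: l).getD i d := fun i => by
      rw [getD_eq_getElem _ _ i.isLt, get_eq_getElem]
    simp_rw [hget]
    rw [Fin.sum_univ_eq_sum_range
        (fun i => logb b (max (((d :: l).take i).count ((d :: l).getD i d)) 1 : ℕ)),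
      ← logb_prod _ _ fun i _ => by positivity, ← Nat.cast_prod,
      prod_range_max_count_take_one _ d fun a => mem_toFinset.mpr, Nat.cast_prod,
      logb_prod _ _ fun a _ => by positivity]

theorem insertion_comparisons_le (b : ℝ) (S : List α) (i : Fin S.length) :
    ((if i.val = 0 then 0 else
        ⌈logb b ((i.val : ℝ) / ((max ((S.take i.val).count (S.get i)) 1 : ℕ) : ℝ))⌉ + 1 : ℤ)
        : ℝ) ≤
      logb b i - logb b (max ((S.take i).count (S.get i)) 1 : ℕ) + 2 := by
  split_ifs with hi
  · simp [hi]
  · exact ceil_logb_div_add_one_le b (by exact_mod_cast hi) (by positivity)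

theorem sum_logb_count_le {b : ℝ} (hb : 1 < b) (S : List α) :
    ∑ a ∈ S.toFinset, logb b (S.count a) ≤ S.toFinset.card * logb b S.length := by
  rw [← nsmul_eq_mul, ← sum_const]
  exact sum_le_sum fun a ha => logb_le_logb_of_le hb
    (by exact_mod_cast count_pos_iff.mpr (mem_toFinset.mp ha)) (by exact_mod_cast count_le_length)

end List

/-- Theorem 3 (comparison count): the total number of binary comparisons
`Σ_{i=2}^n (⌈log₂((i−1)/max(c_i,1))⌉ + 1)` used by the online stable sorting
algorithm is at most `nH + 2n + (σ+1)(log₂ n + 2)`.  Here the sum is written over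
zero-based positions `i` of `S` (the position-`0` term, corresponding to the first
element, is zero), `c` is the number of previous occurrences of the current
element, `σ` is the number of distinct elements and `H` is the entropy of the
distribution of the elements of `S`. -/
theorem online_binary_comparison_bound {α : Type*} [DecidableEq α] (S : List α)
    (n σ : ℕ) (hn : n = S.length) (hn2 : 2 ≤ n) (hσ : σ = S.toFinset.card) (H : ℝ)
    (hH : H = ∑ a ∈ S.toFinset,
      ((S.count a : ℝ) / n) * Real.logb 2 ((n : ℝ) / (S.count a))) :
    ((∑ i : Fin S.length, if i.val = 0 then 0 else
        ⌈Real.logb 2 ((i.val : ℝ) /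
          ((max ((S.take i.val).count (S.get i)) 1 : ℕ) : ℝ))⌉ + 1 : ℤ) : ℝ) ≤
      n * H + 2 * n + (σ + 1) * (Real.logb 2 n + 2) := by
  subst hn hσ hH
  have hcount := List.sum_toFinset_count_eq_length S
  have hcount_ne : ∀ a ∈ S.toFinset, S.count a ≠ 0 :=
    fun a ha => (List.count_pos_iff.mpr (List.mem_toFinset.mp ha)).ne'
  have hlog_length : 0 ≤ logb 2 S.length :=
    logb_nonneg one_lt_two (by exact_mod_cast (by omega : 1 ≤ S.length))
  have hlog_count := List.sum_logb_count_le one_lt_two S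
  have hmultinomial :=
    logb_factorial_sub_sum_logb_factorial_le S.toFinset S.count one_lt_two hcount
  rw [mul_sum_div_mul_logb_div_eq 2 S.toFinset S.count hcount]
  calc _ ≤ ∑ i : Fin S.length,
        (logb 2 i - logb 2 (max ((S.take i).count (S.get i)) 1 : ℕ) + 2) := by
        rw [Int.cast_sum]
        exact sum_le_sum fun i _ => List.insertion_comparisons_le 2 S i
    _ = logb 2 ((S.length - 1)! : ℝ) - ∑ a ∈ S.toFinset, logb 2 ((S.count a - 1)! : ℝ)
          + 2 * S.length := by
        rw [sum_add_distrib, sum_sub_distrib, List.sum_logb_max_count_take_one,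
          Fin.sum_univ_eq_sum_range (fun i => logb 2 (i : ℝ)),
          sum_range_logb_eq_logb_factorial, sum_const, Finset.card_fin, nsmul_eq_mul, mul_comm]
    _ = logb 2 (S.length ! : ℝ) - ∑ a ∈ S.toFinset, logb 2 ((S.count a)! : ℝ)
          - logb 2 S.length + ∑ a ∈ S.toFinset, logb 2 (S.count a) + 2 * S.length := by
        rw [logb_factorial_sub_one 2 (by omega),
          sum_congr rfl fun a ha => logb_factorial_sub_one 2 (hcount_ne a ha), sum_sub_distrib]
        ring
    _ ≤ _ := by linarith [(Nat.cast_nonneg S.toFinset.card : (0 : ℝ) ≤ S.toFinset.card)]
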